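/- arXiv:2205.15587 — 2 statements merged into one kernel-verified Lean document; each statement's English description precedes it below -/
import Mathlib

section
/- Let d ≥ 3 be an integer, C > 0, 0 < α ≤ 1, c > 0, and let (λ_k)_{k≥0} be a sequence of real numbers with |λ_k − k| ≤ C α^{2k} / (2k+3) and λ_k + k + d − 2 − |λ_k − k| ≥ c for all k ≥ 0. For R ≥ 1 and ξ ∈ ℝ^d define S_R(ξ) = 2 π^{d/2} Σ_{k=0}^∞ (−1)^k / (k! Γ(k + d/2)) (|ξ|/2)^{2k} (λ_k − k) (2k+d−2) / (λ_k + k + d − 2 − R^{−(2k+d−2)} (λ_k − k)), and S_∞(ξ) = 2 π^{d/2} Σ_{k=0}^∞ (−1)^k / (k! Γ(k + d/2)) (|ξ|/2)^{2k} (λ_k − k) (2k+d−2) / (λ_k + k + d − 2). Then for every R ≥ 1 and every ξ the series S_R(ξ) and S_∞(ξ) converge absolutely, and for every ξ ∈ ℝ^d, S_R(ξ) → S_∞(ξ) as R → ∞. -/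
open Filter

/-- The `k`-th term of the series `S_R(ξ)` (Fourier transform of the Born approximation in the
ball of radius `R`), expressed through the DtN eigenvalues `lam k` on the unit sphere;
`t` stands for `‖ξ‖`. -/
noncomputable def bornTermR (d : ℕ) (lam : ℕ → ℝ) (R : ℝ) (k : ℕ) (t : ℝ) : ℝ :=
  2 * Real.pi ^ ((d : ℝ) / 2) *
    ((-1 : ℝ) ^ k / ((k.factorial : ℝ) * Real.Gamma ((k : ℝ) + (d : ℝ) / 2)) *
      (t / 2) ^ (2 * k) *
      ((lam k - (k : ℝ)) * (2 * (k : ℝ) + (d : ℝ) - 2) /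
        (lam k + (k : ℝ) + (d : ℝ) - 2 -
          R ^ (-(2 * (k : ℝ) + (d : ℝ) - 2)) * (lam k - (k : ℝ)))))

/-- The `k`-th term of the scattering-limit series `S_∞(ξ)`. -/
noncomputable def bornTermInf (d : ℕ) (lam : ℕ → ℝ) (k : ℕ) (t : ℝ) : ℝ :=
  2 * Real.pi ^ ((d : ℝ) / 2) *
    ((-1 : ℝ) ^ k / ((k.factorial : ℝ) * Real.Gamma ((k : ℝ) + (d : ℝ) / 2)) *
      (t / 2) ^ (2 * k) *
      ((lam k - (k : ℝ)) * (2 * (k : ℝ) + (d : ℝ) - 2) /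
        (lam k + (k : ℝ) + (d : ℝ) - 2)))

/-!
Both series are dominated, uniformly in `R ≥ 1`, by a multiple of the exponential series
`∑ (α ‖ξ‖)^{2k} / (2^k k!)`: the coefficient bound gives `|λ_k - k| ≤ C α^{2k}`, the hypothesis on
`λ_k + k + d - 2 - |λ_k - k|` bounds every denominator below by `c` (as `0 < R^{-(2k+d-2)} ≤ 1`),
`Γ(k + d/2) ≥ Γ(d/2)`, and the remaining factor `2k + d - 2` is absorbed by `2^k`.
Each term of `S_R` tends to the corresponding term of `S_∞` since `R^{-(2k+d-2)} → 0`,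
so dominated convergence for series gives `S_R(ξ) → S_∞(ξ)`.
-/

lemma Real.Gamma_le_Gamma_add_nat {x : ℝ} (hx : 1 ≤ x) (n : ℕ) :
    Real.Gamma x ≤ Real.Gamma (x + n) := by
  induction n with
  | zero => simp
  | succ n ih =>
    have hpos : 0 < Real.Gamma (x + n) := Real.Gamma_pos_of_pos (by positivity)
    have hstep : Real.Gamma (x + n + 1) = (x + n) * Real.Gamma (x + n) :=
      Real.Gamma_add_one (by positivity)
    push_cast
    rw [← add_assoc, hstep]
    nlinarith [(Nat.cast_nonneg n : (0 : ℝ) ≤ n)]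

noncomputable def bornTerm (d k : ℕ) (t μ den : ℝ) : ℝ :=
  2 * Real.pi ^ ((d : ℝ) / 2) *
    ((-1 : ℝ) ^ k / ((k.factorial : ℝ) * Real.Gamma ((k : ℝ) + (d : ℝ) / 2)) *
      (t / 2) ^ (2 * k) * (μ * (2 * (k : ℝ) + (d : ℝ) - 2) / den))

lemma bornTermR_eq (d : ℕ) (lam : ℕ → ℝ) (R : ℝ) (k : ℕ) (t : ℝ) :
    bornTermR d lam R k t = bornTerm d k t (lam k - k)
      (lam k + k + d - 2 - R ^ (-(2 * (k : ℝ) + d - 2)) * (lam k - k)) := rfl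

lemma bornTermInf_eq (d : ℕ) (lam : ℕ → ℝ) (k : ℕ) (t : ℝ) :
    bornTermInf d lam k t = bornTerm d k t (lam k - k) (lam k + k + d - 2) := rfl

lemma abs_bornTerm_le {d : ℕ} (hd : 2 ≤ d) (k : ℕ) (t μ : ℝ) {c den : ℝ} (hc : 0 < c)
    (hden : c ≤ den) :
    |bornTerm d k t μ den| ≤ 2 * Real.pi ^ ((d : ℝ) / 2) * ((d : ℝ) + 2) /
      (c * Real.Gamma ((d : ℝ) / 2)) * (|μ| * (t ^ 2 / 2) ^ k / (k.factorial : ℝ)) := by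
  have hd2 : (2 : ℝ) ≤ d := by exact_mod_cast hd
  have hk : (0 : ℝ) ≤ k := Nat.cast_nonneg k
  have hΓ : 0 < Real.Gamma ((d : ℝ) / 2) := Real.Gamma_pos_of_pos (by linarith)
  have hΓle : Real.Gamma ((d : ℝ) / 2) ≤ Real.Gamma ((k : ℝ) + (d : ℝ) / 2) := by
    rw [add_comm]; exact Real.Gamma_le_Gamma_add_nat (by linarith) k
  have hden0 : 0 < den := hc.trans_le hden
  have hp : (0 : ℝ) ≤ 2 * k + d - 2 := by linarith
  have hp_le : 2 * (k : ℝ) + d - 2 ≤ ((d : ℝ) + 2) * 2 ^ k := by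
    have : (k : ℝ) ≤ 2 ^ k := by exact_mod_cast Nat.lt_two_pow_self.le
    have : (1 : ℝ) ≤ 2 ^ k := one_le_pow₀ one_le_two
    nlinarith
  have habs : |bornTerm d k t μ den| = 2 * Real.pi ^ ((d : ℝ) / 2) *
      (1 / ((k.factorial : ℝ) * Real.Gamma ((k : ℝ) + (d : ℝ) / 2)) *
        (t ^ 2 / 4) ^ k * (|μ| * (2 * (k : ℝ) + (d : ℝ) - 2) / den)) := by
    have hΓk : 0 < Real.Gamma ((k : ℝ) + (d : ℝ) / 2) := hΓ.trans_le hΓle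
    rw [bornTerm, abs_mul, abs_of_nonneg (by positivity), abs_mul, abs_mul, abs_div, abs_pow,
      abs_neg, abs_one, one_pow, abs_of_pos (by positivity), abs_div, abs_mul,
      abs_of_nonneg hp, abs_of_pos hden0, pow_mul, abs_of_nonneg (by positivity)]
    ring
  calc |bornTerm d k t μ den|
      ≤ 2 * Real.pi ^ ((d : ℝ) / 2) *
        (1 / ((k.factorial : ℝ) * Real.Gamma ((d : ℝ) / 2)) *
          (t ^ 2 / 4) ^ k * (|μ| * (((d : ℝ) + 2) * 2 ^ k) / c)) := by
        rw [habs]; gcongr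
    _ = _ := by
        rw [show t ^ 2 / 2 = t ^ 2 / 4 * 2 by ring, mul_pow]
        field_simp

lemma abs_sub_le_of_le_div_two_mul_add_three {x : ℝ} {k : ℕ} {C α : ℝ}
    (h : |x - k| ≤ C * α ^ (2 * k) / (2 * (k : ℝ) + 3)) : |x - k| ≤ C * α ^ (2 * k) := by
  have hk : (1 : ℝ) ≤ 2 * k + 3 := by linarith [(Nat.cast_nonneg k : (0 : ℝ) ≤ k)]
  rw [le_div_iff₀ (by positivity)] at h
  nlinarith [abs_nonneg (x - k)]

noncomputable def bornMajorant (d : ℕ) (C α c t : ℝ) (k : ℕ) : ℝ :=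
  2 * Real.pi ^ ((d : ℝ) / 2) * ((d : ℝ) + 2) / (c * Real.Gamma ((d : ℝ) / 2)) *
    (C * ((α * t) ^ 2 / 2) ^ k / (k.factorial : ℝ))

lemma summable_bornMajorant (d : ℕ) (C α c t : ℝ) : Summable (bornMajorant d C α c t) := by
  refine (((Real.summable_pow_div_factorial ((α * t) ^ 2 / 2)).mul_left C).mul_left
      (2 * Real.pi ^ ((d : ℝ) / 2) * ((d : ℝ) + 2) / (c * Real.Gamma ((d : ℝ) / 2)))).congr
    fun k => ?_
  rw [bornMajorant, mul_div_assoc C]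

lemma abs_bornTerm_le_bornMajorant {d : ℕ} (hd : 2 ≤ d) {k : ℕ} {t μ C α c den : ℝ}
    (hμ : |μ| ≤ C * α ^ (2 * k)) (hc : 0 < c) (hden : c ≤ den) :
    |bornTerm d k t μ den| ≤ bornMajorant d C α c t k := by
  refine (abs_bornTerm_le hd k t μ hc hden).trans ?_
  have hK : 0 ≤ 2 * Real.pi ^ ((d : ℝ) / 2) * ((d : ℝ) + 2) / (c * Real.Gamma ((d : ℝ) / 2)) :=
    div_nonneg (by positivity) (mul_nonneg hc.le (Real.Gamma_nonneg_of_nonneg (by positivity)))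
  have hsplit : C * ((α * t) ^ 2 / 2) ^ k = C * α ^ (2 * k) * (t ^ 2 / 2) ^ k := by ring
  rw [bornMajorant, hsplit]
  gcongr

lemma le_sub_rpow_mul_of_le_sub_abs {a c μ R p : ℝ} (hR : 1 ≤ R) (hp : 0 ≤ p)
    (h : c ≤ a - |μ|) : c ≤ a - R ^ (-p) * μ := by
  have hs0 : 0 ≤ R ^ (-p) := Real.rpow_nonneg (by linarith) _
  have hs1 : R ^ (-p) ≤ 1 := Real.rpow_le_one_of_one_le_of_nonpos hR (by linarith)
  have : R ^ (-p) * μ ≤ |μ| := by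
    calc R ^ (-p) * μ ≤ R ^ (-p) * |μ| := mul_le_mul_of_nonneg_left (le_abs_self μ) hs0
      _ ≤ |μ| := mul_le_of_le_one_left (abs_nonneg μ) hs1
  linarith

lemma tendsto_bornTerm_sub_rpow_mul {d k : ℕ} {t μ a p : ℝ} (hp : 0 < p) (ha : a ≠ 0) :
    Tendsto (fun R : ℝ => bornTerm d k t μ (a - R ^ (-p) * μ)) atTop
      (nhds (bornTerm d k t μ a)) := by
  have hden : Tendsto (fun R : ℝ => a - R ^ (-p) * μ) atTop (nhds a) := by
    simpa using tendsto_const_nhds.sub ((tendsto_rpow_neg_atTop hp).mul_const μ)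
  exact ((tendsto_const_nhds.div hden ha).const_mul _).const_mul _

section

variable {d : ℕ} {C α c : ℝ} {lam : ℕ → ℝ}

lemma norm_bornTermR_le (hd : 2 ≤ d) (hc : 0 < c)
    (h1 : ∀ k : ℕ, |lam k - (k : ℝ)| ≤ C * α ^ (2 * k) / (2 * (k : ℝ) + 3))
    (h2 : ∀ k : ℕ, c ≤ lam k + (k : ℝ) + (d : ℝ) - 2 - |lam k - (k : ℝ)|)
    {R : ℝ} (hR : 1 ≤ R) (t : ℝ) (k : ℕ) :
    ‖bornTermR d lam R k t‖ ≤ bornMajorant d C α c t k := by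
  have hp : (0 : ℝ) ≤ 2 * k + d - 2 := by
    have : (2 : ℝ) ≤ d := by exact_mod_cast hd
    linarith [(Nat.cast_nonneg k : (0 : ℝ) ≤ k)]
  rw [Real.norm_eq_abs, bornTermR_eq]
  exact abs_bornTerm_le_bornMajorant hd (abs_sub_le_of_le_div_two_mul_add_three (h1 k)) hc
    (le_sub_rpow_mul_of_le_sub_abs hR hp (h2 k))

lemma norm_bornTermInf_le (hd : 2 ≤ d) (hc : 0 < c)
    (h1 : ∀ k : ℕ, |lam k - (k : ℝ)| ≤ C * α ^ (2 * k) / (2 * (k : ℝ) + 3))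
    (h2 : ∀ k : ℕ, c ≤ lam k + (k : ℝ) + (d : ℝ) - 2 - |lam k - (k : ℝ)|) (t : ℝ) (k : ℕ) :
    ‖bornTermInf d lam k t‖ ≤ bornMajorant d C α c t k := by
  rw [Real.norm_eq_abs, bornTermInf_eq]
  exact abs_bornTerm_le_bornMajorant hd (abs_sub_le_of_le_div_two_mul_add_three (h1 k)) hc
    ((h2 k).trans (sub_le_self _ (abs_nonneg _)))

lemma tendsto_bornTermR_atTop (hd : 3 ≤ d) (hc : 0 < c)
    (h2 : ∀ k : ℕ, c ≤ lam k + (k : ℝ) + (d : ℝ) - 2 - |lam k - (k : ℝ)|) (t : ℝ) (k : ℕ) :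
    Tendsto (fun R : ℝ => bornTermR d lam R k t) atTop (nhds (bornTermInf d lam k t)) := by
  have hp : (0 : ℝ) < 2 * k + d - 2 := by
    have : (3 : ℝ) ≤ d := by exact_mod_cast hd
    linarith [(Nat.cast_nonneg k : (0 : ℝ) ≤ k)]
  have ha : lam k + k + d - 2 ≠ 0 :=
    (hc.trans_le ((h2 k).trans (sub_le_self _ (abs_nonneg _)))).ne'
  simpa only [bornTermR_eq, bornTermInf_eq] using tendsto_bornTerm_sub_rpow_mul hp ha

end

theorem stmt_8_general (d : ℕ) (hd : 3 ≤ d) (C α c : ℝ)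
    (hc : 0 < c) (lam : ℕ → ℝ)
    (h1 : ∀ k : ℕ, |lam k - (k : ℝ)| ≤ C * α ^ (2 * k) / (2 * (k : ℝ) + 3))
    (h2 : ∀ k : ℕ, c ≤ lam k + (k : ℝ) + (d : ℝ) - 2 - |lam k - (k : ℝ)|) :
    (∀ R : ℝ, 1 ≤ R → ∀ ξ : EuclideanSpace ℝ (Fin d),
      Summable (fun k : ℕ => ‖bornTermR d lam R k ‖ξ‖‖)) ∧
    (∀ ξ : EuclideanSpace ℝ (Fin d),
      Summable (fun k : ℕ => ‖bornTermInf d lam k ‖ξ‖‖)) ∧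
    (∀ ξ : EuclideanSpace ℝ (Fin d),
      Tendsto (fun R : ℝ => ∑' k : ℕ, bornTermR d lam R k ‖ξ‖) atTop
        (nhds (∑' k : ℕ, bornTermInf d lam k ‖ξ‖))) := by
  have hd2 : 2 ≤ d := by omega
  have hboundR := fun R (hR : 1 ≤ R) t => norm_bornTermR_le hd2 hc h1 h2 hR t
  refine ⟨fun R hR ξ => ?_, fun ξ => ?_, fun ξ => ?_⟩
  · exact (summable_bornMajorant d C α c ‖ξ‖).of_nonneg_of_le (fun _ => norm_nonneg _)
      (hboundR R hR ‖ξ‖)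
  · exact (summable_bornMajorant d C α c ‖ξ‖).of_nonneg_of_le (fun _ => norm_nonneg _)
      (norm_bornTermInf_le hd2 hc h1 h2 ‖ξ‖)
  · exact tendsto_tsum_of_dominated_convergence (summable_bornMajorant d C α c ‖ξ‖)
      (tendsto_bornTermR_atTop hd hc h2 ‖ξ‖)
      (eventually_atTop.2 ⟨1, fun R hR => hboundR R hR ‖ξ‖⟩)

/-- Under the bounds `|λ_k - k| ≤ C α^{2k}/(2k+3)` and
`λ_k + k + d - 2 - |λ_k - k| ≥ c > 0`, the series `S_R(ξ)` and `S_∞(ξ)` converge absolutely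
for every `R ≥ 1` and every `ξ`, and `S_R(ξ) → S_∞(ξ)` as `R → ∞`. -/
theorem stmt_8 (d : ℕ) (hd : 3 ≤ d) (C α c : ℝ) (hC : 0 < C) (hα : 0 < α) (hα1 : α ≤ 1)
    (hc : 0 < c) (lam : ℕ → ℝ)
    (h1 : ∀ k : ℕ, |lam k - (k : ℝ)| ≤ C * α ^ (2 * k) / (2 * (k : ℝ) + 3))
    (h2 : ∀ k : ℕ, c ≤ lam k + (k : ℝ) + (d : ℝ) - 2 - |lam k - (k : ℝ)|) :
    (∀ R : ℝ, 1 ≤ R → ∀ ξ : EuclideanSpace ℝ (Fin d),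
      Summable (fun k : ℕ => ‖bornTermR d lam R k ‖ξ‖‖)) ∧
    (∀ ξ : EuclideanSpace ℝ (Fin d),
      Summable (fun k : ℕ => ‖bornTermInf d lam k ‖ξ‖‖)) ∧
    (∀ ξ : EuclideanSpace ℝ (Fin d),
      Tendsto (fun R : ℝ => ∑' k : ℕ, bornTermR d lam R k ‖ξ‖) atTop
        (nhds (∑' k : ℕ, bornTermInf d lam k ‖ξ‖))) :=
  stmt_8_general d hd C α c hc lam h1 h2
end

section
/- Let d ≥ 1 be an integer, let U ⊆ ℝ^d be open, let γ : U → ℝ be twice continuously differentiable with γ(x) > 0 on U, and let v : U → ℝ be twice continuously differentiable. Set u = γ^{−1/2} v. Then for every x ∈ U, div(γ ∇u)(x) = √γ(x) ( Δv(x) − q(x) v(x) ), where q = Δ(√γ)/√γ, Δ is the Laplacian Σ_i ∂²/∂x_i², and div(γ∇u) = Σ_i ∂_i(γ ∂_i u). -/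
/-- The Laplacian `Δf(x) = Σ_i ∂²f/∂x_i²(x)` on `ℝ^d`, via iterated Fréchet derivatives in the
coordinate directions. -/
noncomputable def lap (d : ℕ) (f : EuclideanSpace ℝ (Fin d) → ℝ)
    (x : EuclideanSpace ℝ (Fin d)) : ℝ :=
  ∑ i : Fin d,
    fderiv ℝ (fun y => fderiv ℝ f y (EuclideanSpace.single i 1)) x (EuclideanSpace.single i 1)

/-- The divergence `div(γ ∇u)(x) = Σ_i ∂_i(γ ∂_i u)(x)` on `ℝ^d`. -/
noncomputable def divGrad (d : ℕ) (γ u : EuclideanSpace ℝ (Fin d) → ℝ)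
    (x : EuclideanSpace ℝ (Fin d)) : ℝ :=
  ∑ i : Fin d,
    fderiv ℝ (fun y => γ y * fderiv ℝ u y (EuclideanSpace.single i 1)) x
      (EuclideanSpace.single i 1)

/-!
Writing `s = √γ`, so that `γ = s²` and `u = v / s`, the quotient rule gives the flux identity
`γ ∂ᵢu = s ∂ᵢv - v ∂ᵢs`. Differentiating once more in direction `i`, the first-order terms
`∂ᵢs ∂ᵢv` cancel, leaving `∂ᵢ(γ ∂ᵢu) = s ∂ᵢ²v - v ∂ᵢ²s`; summing over `i` gives
`div(γ ∇u) = s Δv - v Δs = √γ (Δv - q v)`.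
-/

open Filter Topology

theorem ContDiffAt.differentiableAt_fderiv_apply {𝕜 E F : Type*} [NontriviallyNormedField 𝕜]
    [NormedAddCommGroup E] [NormedSpace 𝕜 E] [NormedAddCommGroup F] [NormedSpace 𝕜 F]
    {f : E → F} {x : E} {n : WithTop ℕ∞} (hf : ContDiffAt 𝕜 n f x) (hn : 2 ≤ n) (w : E) :
    DifferentiableAt 𝕜 (fun y => fderiv 𝕜 f y w) x :=
  ((hf.fderiv_right (m := 1) hn).differentiableAt one_ne_zero).clm_apply
    (differentiableAt_const w)

section DirectionalDerivatives

variable {E : Type*} [NormedAddCommGroup E] [NormedSpace ℝ E] {s v : E → ℝ} {x : E}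

theorem sq_mul_fderiv_div_apply (hs : DifferentiableAt ℝ s x) (hv : DifferentiableAt ℝ v x)
    (h0 : s x ≠ 0) (w : E) :
    s x ^ 2 * fderiv ℝ (fun y => v y / s y) x w =
      s x * fderiv ℝ v x w - v x * fderiv ℝ s x w := by
  have hq : DifferentiableAt ℝ (fun y => v y / s y) x := by
    simpa only [div_eq_mul_inv] using hv.fun_mul (hs.fun_inv h0)
  have hv_eq : v =ᶠ[𝓝 x] fun y => s y * (v y / s y) := by
    filter_upwards [hs.continuousAt.eventually_ne h0] with y hy
    rw [mul_div_cancel₀ _ hy]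
  have hv' := congrArg (· w) (hv_eq.fderiv_eq.trans (fderiv_fun_mul hs hq))
  simp only [add_apply, smul_apply, smul_eq_mul] at hv'
  rw [hv']
  field_simp
  ring

theorem fderiv_wronskian_apply {w : E} (hs : DifferentiableAt ℝ s x)
    (hv : DifferentiableAt ℝ v x) (hs' : DifferentiableAt ℝ (fun y => fderiv ℝ s y w) x)
    (hv' : DifferentiableAt ℝ (fun y => fderiv ℝ v y w) x) :
    fderiv ℝ (fun y => s y * fderiv ℝ v y w - v y * fderiv ℝ s y w) x w =
      s x * fderiv ℝ (fun y => fderiv ℝ v y w) x w -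
        v x * fderiv ℝ (fun y => fderiv ℝ s y w) x w := by
  rw [fderiv_fun_sub (hs.fun_mul hv') (hv.fun_mul hs'), fderiv_fun_mul hs hv',
    fderiv_fun_mul hv hs']
  simp only [sub_apply, add_apply, smul_apply, smul_eq_mul]
  ring

theorem fderiv_mul_fderiv_div_sqrt_apply {γ : E → ℝ} {U : Set E} (hU : IsOpen U)
    (hγ : ContDiffOn ℝ 2 γ U) (hγpos : ∀ y ∈ U, 0 < γ y) (hv : ContDiffOn ℝ 2 v U)
    (hx : x ∈ U) (w : E) :
    fderiv ℝ (fun y => γ y * fderiv ℝ (fun z => v z / √(γ z)) y w) x w =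
      √(γ x) * fderiv ℝ (fun y => fderiv ℝ v y w) x w -
        v x * fderiv ℝ (fun y => fderiv ℝ (fun z => √(γ z)) y w) x w := by
  have hv_at : ∀ y ∈ U, ContDiffAt ℝ 2 v y := fun y hy => hv.contDiffAt (hU.mem_nhds hy)
  have hs_at : ∀ y ∈ U, ContDiffAt ℝ 2 (fun z => √(γ z)) y := fun y hy =>
    (hγ.contDiffAt (hU.mem_nhds hy)).sqrt (hγpos y hy).ne'
  have hflux : (fun y => γ y * fderiv ℝ (fun z => v z / √(γ z)) y w) =ᶠ[𝓝 x]
      fun y => √(γ y) * fderiv ℝ v y w - v y * fderiv ℝ (fun z => √(γ z)) y w := by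
    filter_upwards [hU.mem_nhds hx] with y hy
    conv_lhs => rw [← Real.sq_sqrt (hγpos y hy).le]
    exact sq_mul_fderiv_div_apply ((hs_at y hy).differentiableAt two_ne_zero)
      ((hv_at y hy).differentiableAt two_ne_zero) (Real.sqrt_pos.2 (hγpos y hy)).ne' w
  rw [hflux.fderiv_eq]
  exact fderiv_wronskian_apply ((hs_at x hx).differentiableAt two_ne_zero)
    ((hv_at x hx).differentiableAt two_ne_zero)
    ((hs_at x hx).differentiableAt_fderiv_apply le_rfl w)
    ((hv_at x hx).differentiableAt_fderiv_apply le_rfl w)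

end DirectionalDerivatives

theorem stmt_12_general (d : ℕ) (U : Set (EuclideanSpace ℝ (Fin d))) (hU : IsOpen U)
    (γ v : EuclideanSpace ℝ (Fin d) → ℝ)
    (hγ : ContDiffOn ℝ 2 γ U) (hγpos : ∀ x ∈ U, 0 < γ x)
    (hv : ContDiffOn ℝ 2 v U) :
    ∀ x ∈ U,
      divGrad d γ (fun y => v y / Real.sqrt (γ y)) x =
        Real.sqrt (γ x) *
          (lap d v x - (lap d (fun y => Real.sqrt (γ y)) x / Real.sqrt (γ x)) * v x) := by
  intro x hx
  have hs : Real.sqrt (γ x) ≠ 0 := (Real.sqrt_pos.2 (hγpos x hx)).ne'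
  simp only [divGrad, lap]
  rw [Finset.sum_congr rfl fun i _ =>
      fderiv_mul_fderiv_div_sqrt_apply hU hγ hγpos hv hx (EuclideanSpace.single i 1),
    Finset.sum_sub_distrib, ← Finset.mul_sum, ← Finset.mul_sum]
  field_simp

/-- The Liouville transform: if `γ > 0` is `C²` on an open set `U`, `v` is `C²` on `U` and
`u = γ^{-1/2} v`, then `div(γ ∇u) = √γ (Δv - q v)` on `U`, where `q = Δ(√γ)/√γ`. -/
theorem stmt_12 (d : ℕ) (hd : 1 ≤ d) (U : Set (EuclideanSpace ℝ (Fin d))) (hU : IsOpen U)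
    (γ v : EuclideanSpace ℝ (Fin d) → ℝ)
    (hγ : ContDiffOn ℝ 2 γ U) (hγpos : ∀ x ∈ U, 0 < γ x)
    (hv : ContDiffOn ℝ 2 v U) :
    ∀ x ∈ U,
      divGrad d γ (fun y => v y / Real.sqrt (γ y)) x =
        Real.sqrt (γ x) *
          (lap d v x - (lap d (fun y => Real.sqrt (γ y)) x / Real.sqrt (γ x)) * v x) :=
  stmt_12_general d U hU γ v hγ hγpos hv
end
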